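/- Let f be α-strongly convex and L-smooth with 0 < α < L, let γ, μ, β > 0, let X ⊆ E be nonempty and closed, and let x̄ ∈ E and r_max > 0 be such that ι̂_μ is convex on closedBall(x̄, r_max) and such that f + ι̂_μ has a unique minimizer x_μ over closedBall(x̄, r_max), which lies in the open ball B(x̄, r_max). Define T_μ as the Douglas–Rachford operator of the penalized problem. Then for every z ∈ B(x̄, r_max): T_μ(z) = z if and only if z = x_μ + γ∇f(x_μ); moreover prox_{γf}(x_μ + γ∇f(x_μ)) = x_μ. Consequently, the fixed-point set of T_μ intersected with B(x̄, r_max) contains at most one point, and if x_μ + γ∇f(x_μ) ∈ B(x̄, r_max), then this intersection equals {x_μ + γ∇f(x_μ)} and its image under prox_{γf} is the singleton {x_μ}. -/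

import Mathlib

/-!
For `h` convex and differentiable at `x` and `g` convex on a convex set `K ∋ x`, the point `x`
minimizes `h + g` on `K` iff `g x ≤ g y + ⟪∇h x, y - x⟫` for all `y ∈ K`, so whether `x` is a
minimizer depends on `h` only through `∇h x`. With `p = prox_{γf} z`, the prox optimality
condition reads `z = p + γ ∇f p`; then `y ↦ ‖y - (2p - z)‖² / (2γ)` has gradient `∇f p` at `p`.
Hence `T_μ z = z`, i.e. `q_μ (2p - z) = p`, holds iff `p` minimizes `f + ι̂_μ` on the ball,
i.e. iff `p = x_μ`, i.e. iff `z = x_μ + γ ∇f x_μ`.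
-/

open Set Filter Topology RealInnerProductSpace

def douglasRachford {E : Type*} [AddCommGroup E] [Module ℝ E] (prox q : E → E) (z : E) : E :=
  q ((2 : ℝ) • prox z - z) + z - prox z

theorem douglasRachford_eq_self_iff {E : Type*} [AddCommGroup E] [Module ℝ E] {prox q : E → E}
    {z : E} : douglasRachford prox q z = z ↔ q ((2 : ℝ) • prox z - z) = prox z := by
  rw [douglasRachford, add_sub_right_comm, add_eq_right, sub_eq_zero]

section FirstOrderOptimality

variable {E : Type*} [NormedAddCommGroup E] [InnerProductSpace ℝ E]

theorem convexOn_const_mul_norm_sub_sq {c : ℝ} (hc : 0 ≤ c) (z : E) :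
    ConvexOn ℝ univ (fun y => c * ‖y - z‖ ^ 2) := by
  have := ((convexOn_univ_norm.pow (fun _ _ => norm_nonneg _) 2).translate_right (-z)).smul hc
  simpa [Function.comp_def, sub_eq_neg_add] using this

variable [CompleteSpace E] {s : Set E} {h g : E → ℝ} {G x y : E}

theorem HasGradientAt.add {h₁ h₂ : E → ℝ} {G₁ G₂ : E} (hG₁ : HasGradientAt h₁ G₁ x)
    (hG₂ : HasGradientAt h₂ G₂ x) : HasGradientAt (fun y => h₁ y + h₂ y) (G₁ + G₂) x := by
  rw [hasGradientAt_iff_hasFDerivAt, map_add]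
  exact hG₁.hasFDerivAt.add hG₂.hasFDerivAt

theorem hasGradientAt_const_mul_norm_sub_sq (c : ℝ) (z x : E) :
    HasGradientAt (fun y => c * ‖y - z‖ ^ 2) ((2 * c) • (x - z)) x := by
  rw [hasGradientAt_iff_hasFDerivAt]
  refine (((hasFDerivAt_id x).sub_const z).norm_sq.const_mul c).congr_fderiv ?_
  ext v
  simp only [InnerProductSpace.toDual_apply_apply, smul_apply, ContinuousLinearMap.comp_id,
    id_eq, innerSL_apply_apply, nsmul_eq_mul, Nat.cast_ofNat, smul_eq_mul, real_inner_smul_left]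
  ring

theorem HasGradientAt.tendsto_slope_zero_right (hh : HasGradientAt h G x) (v : E) :
    Tendsto (fun t : ℝ => t⁻¹ * (h (x + t • v) - h x)) (𝓝[>] 0) (𝓝 ⟪G, v⟫) := by
  simpa using (hh.hasFDerivAt.hasLineDerivAt v).tendsto_slope_zero_right

theorem ConvexOn.add_inner_le_of_hasGradientAt (hh : ConvexOn ℝ s h) (hx : x ∈ s) (hy : y ∈ s)
    (hG : HasGradientAt h G x) : h x + ⟪G, y - x⟫ ≤ h y := by
  have hslope : ∀ t ∈ Ioc (0 : ℝ) 1, t⁻¹ * (h (x + t • (y - x)) - h x) ≤ h y - h x := by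
    intro t ⟨ht₀, ht₁⟩
    have hconv := hh.2 hx hy (sub_nonneg.2 ht₁) ht₀.le (sub_add_cancel 1 t)
    rw [show (1 - t) • x + t • y = x + t • (y - x) by module, smul_eq_mul, smul_eq_mul] at hconv
    rw [inv_mul_le_iff₀ ht₀]
    linarith
  have := le_of_tendsto (hG.tendsto_slope_zero_right (y - x))
    (eventually_of_mem (Ioc_mem_nhdsGT zero_lt_one) hslope)
  linarith

theorem le_add_inner_of_isMinOn_add (hg : ConvexOn ℝ s g) (hx : x ∈ s) (hy : y ∈ s)
    (hG : HasGradientAt h G x) (hmin : IsMinOn (h + g) s x) : g x ≤ g y + ⟪G, y - x⟫ := by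
  have hslope : ∀ t ∈ Ioc (0 : ℝ) 1, g x - g y ≤ t⁻¹ * (h (x + t • (y - x)) - h x) := by
    intro t ⟨ht₀, ht₁⟩
    have hconv := hg.2 hx hy (sub_nonneg.2 ht₁) ht₀.le (sub_add_cancel 1 t)
    rw [show (1 - t) • x + t • y = x + t • (y - x) by module, smul_eq_mul, smul_eq_mul] at hconv
    have hle : h x + g x ≤ h (x + t • (y - x)) + g (x + t • (y - x)) :=
      hmin (hg.1.add_smul_sub_mem hx hy ⟨ht₀.le, ht₁⟩)
    rw [le_inv_mul_iff₀ ht₀]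
    nlinarith
  have := ge_of_tendsto (hG.tendsto_slope_zero_right (y - x))
    (eventually_of_mem (Ioc_mem_nhdsGT zero_lt_one) hslope)
  linarith

theorem ConvexOn.isMinOn_add_iff_forall_le_add_inner (hh : ConvexOn ℝ s h)
    (hg : ConvexOn ℝ s g) (hx : x ∈ s) (hG : HasGradientAt h G x) :
    IsMinOn (h + g) s x ↔ ∀ y ∈ s, g x ≤ g y + ⟪G, y - x⟫ := by
  refine ⟨fun hmin y hy => le_add_inner_of_isMinOn_add hg hx hy hG hmin,
    fun H => isMinOn_iff.2 fun y hy => ?_⟩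
  have := hh.add_inner_le_of_hasGradientAt hx hy hG
  simp only [Pi.add_apply]
  linarith [H y hy]

theorem ConvexOn.isMinOn_add_iff_of_hasGradientAt {h₁ h₂ : E → ℝ} (hh₁ : ConvexOn ℝ s h₁)
    (hh₂ : ConvexOn ℝ s h₂) (hg : ConvexOn ℝ s g) (hx : x ∈ s) (hG₁ : HasGradientAt h₁ G x)
    (hG₂ : HasGradientAt h₂ G x) : IsMinOn (h₁ + g) s x ↔ IsMinOn (h₂ + g) s x := by
  rw [hh₁.isMinOn_add_iff_forall_le_add_inner hg hx hG₁,
    hh₂.isMinOn_add_iff_forall_le_add_inner hg hx hG₂]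

theorem ConvexOn.isMinOn_univ_iff_gradient_eq_zero (hh : ConvexOn ℝ univ h)
    (hG : HasGradientAt h G x) : IsMinOn h univ x ↔ G = 0 := by
  refine ⟨fun hmin => ?_, fun hG₀ y _ => ?_⟩
  · simpa using (hmin.isLocalMin univ_mem).hasFDerivAt_eq_zero hG.hasFDerivAt
  · simpa [hG₀] using hh.add_inner_le_of_hasGradientAt (mem_univ x) (mem_univ y) hG

end FirstOrderOptimality

section Prox

variable {E : Type*} [NormedAddCommGroup E] [InnerProductSpace ℝ E] [CompleteSpace E]
  {f : E → ℝ} {f' : E → E} {γ : ℝ}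

theorem isMinOn_prox_iff (hγ : 0 < γ) (hf : ConvexOn ℝ univ f)
    (hgrad : ∀ x, HasGradientAt f (f' x) x) (x z : E) :
    IsMinOn (fun y => f y + 1 / (2 * γ) * ‖y - z‖ ^ 2) univ x ↔ z = x + γ • f' x := by
  have hG := (hgrad x).add (hasGradientAt_const_mul_norm_sub_sq (1 / (2 * γ)) z x)
  refine ((hf.add (convexOn_const_mul_norm_sub_sq (by positivity) z)
    ).isMinOn_univ_iff_gradient_eq_zero hG).trans ?_
  rw [show 2 * (1 / (2 * γ)) = γ⁻¹ by field_simp,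
    show f' x + γ⁻¹ • (x - z) = γ⁻¹ • (x + γ • f' x - z) by
      rw [smul_sub, smul_sub, smul_add, inv_smul_smul₀ hγ.ne']; abel,
    smul_eq_zero_iff_right (inv_ne_zero hγ.ne'), sub_eq_zero, eq_comm]

theorem prox_eq_iff {prox : E → E} (hγ : 0 < γ) (hf : ConvexOn ℝ univ f)
    (hgrad : ∀ x, HasGradientAt f (f' x) x)
    (hprox : ∀ z, IsMinOn (fun y => f y + 1 / (2 * γ) * ‖y - z‖ ^ 2) univ (prox z))
    (hprox_unique : ∀ z y,
      IsMinOn (fun w => f w + 1 / (2 * γ) * ‖w - z‖ ^ 2) univ y → y = prox z)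
    {x z : E} : prox z = x ↔ z = x + γ • f' x :=
  ⟨fun h => h ▸ (isMinOn_prox_iff hγ hf hgrad _ z).1 (hprox z),
    fun h => (hprox_unique z x ((isMinOn_prox_iff hγ hf hgrad x z).2 h)).symm⟩

theorem douglasRachford_eq_self_iff_eq_add_smul {K : Set E} {g : E → ℝ} {prox q : E → E}
    {x₀ : E} (hγ : 0 < γ) (hf : ConvexOn ℝ univ f) (hgrad : ∀ x, HasGradientAt f (f' x) x)
    (hg : ConvexOn ℝ K g) (hx₀ : x₀ ∈ K) (hmin : IsMinOn (f + g) K x₀)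
    (hmin_unique : ∀ y ∈ K, IsMinOn (f + g) K y → y = x₀)
    (hprox : ∀ z, IsMinOn (fun y => f y + 1 / (2 * γ) * ‖y - z‖ ^ 2) univ (prox z))
    (hprox_unique : ∀ z y,
      IsMinOn (fun w => f w + 1 / (2 * γ) * ‖w - z‖ ^ 2) univ y → y = prox z)
    (hq : ∀ w, q w ∈ K ∧ IsMinOn (fun y => g y + 1 / (2 * γ) * ‖y - w‖ ^ 2) K (q w))
    (hq_unique : ∀ w y, y ∈ K →
      IsMinOn (fun v => g v + 1 / (2 * γ) * ‖v - w‖ ^ 2) K y → y = q w)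
    (z : E) : douglasRachford prox q z = z ↔ z = x₀ + γ • f' x₀ := by
  set p := prox z
  have hz : z = p + γ • f' p := (isMinOn_prox_iff hγ hf hgrad p z).1 (hprox z)
  set w := (2 : ℝ) • p - z with hw
  have hquad : HasGradientAt (fun y => 1 / (2 * γ) * ‖y - w‖ ^ 2) (f' p) p := by
    convert hasGradientAt_const_mul_norm_sub_sq (1 / (2 * γ)) w p using 1
    rw [show p - w = γ • f' p by rw [hw, hz]; module, smul_smul,
      show 2 * (1 / (2 * γ)) * γ = 1 by field_simp, one_smul]
  have hq_iff (hpK : p ∈ K) :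
      IsMinOn (fun y => g y + 1 / (2 * γ) * ‖y - w‖ ^ 2) K p ↔ IsMinOn (f + g) K p := by
    rw [show (fun y => g y + 1 / (2 * γ) * ‖y - w‖ ^ 2)
        = (fun y => 1 / (2 * γ) * ‖y - w‖ ^ 2) + g from funext fun _ => add_comm _ _]
    exact ((convexOn_const_mul_norm_sub_sq (by positivity) w).subset (subset_univ K) hg.1
      ).isMinOn_add_iff_of_hasGradientAt (hf.subset (subset_univ K) hg.1) hg hpK hquad (hgrad p)
  calc douglasRachford prox q z = z ↔ q w = p := douglasRachford_eq_self_iff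
    _ ↔ p ∈ K ∧ IsMinOn (f + g) K p := by
      refine ⟨fun h => ?_, fun ⟨hpK, hpmin⟩ => (hq_unique w p hpK ((hq_iff hpK).2 hpmin)).symm⟩
      obtain ⟨hpK, hpmin⟩ := h ▸ hq w
      exact ⟨hpK, (hq_iff hpK).1 hpmin⟩
    _ ↔ p = x₀ := ⟨fun ⟨hpK, hpmin⟩ => hmin_unique p hpK hpmin, fun h => h ▸ ⟨hx₀, hmin⟩⟩
    _ ↔ z = x₀ + γ • f' x₀ := prox_eq_iff hγ hf hgrad hprox hprox_unique

end Prox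

theorem nexos_fixed_point_relationship
    {E : Type*} [NormedAddCommGroup E] [InnerProductSpace ℝ E] [FiniteDimensional ℝ E]
    (X : Set E)
    (f : E → ℝ) (f' : E → E) (α β γ μ : ℝ)
    (hα : 0 < α)
    (hsc : ConvexOn ℝ Set.univ (fun y => f y - α / 2 * ‖y‖ ^ 2))
    (hgrad : ∀ x, HasGradientAt f (f' x) x)
    (hγ : 0 < γ)
    (xbar : E) (rmax : ℝ)
    -- `ι̂_μ` is convex on the closed ball
    (hpenconv : ConvexOn ℝ (Metric.closedBall xbar rmax)
      (fun y => (Metric.infDist y X) ^ 2 / (2 * μ) + β / 2 * ‖y‖ ^ 2))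
    -- `xμ` is the unique minimizer of `f + ι̂_μ` over the closed ball, and lies in the open ball
    (xμ : E) (hxμball : xμ ∈ Metric.ball xbar rmax)
    (hxμmin : IsMinOn (fun y => f y + (Metric.infDist y X) ^ 2 / (2 * μ) + β / 2 * ‖y‖ ^ 2)
      (Metric.closedBall xbar rmax) xμ)
    (hxμuniq : ∀ y ∈ Metric.closedBall xbar rmax,
      IsMinOn (fun w => f w + (Metric.infDist w X) ^ 2 / (2 * μ) + β / 2 * ‖w‖ ^ 2)
        (Metric.closedBall xbar rmax) y → y = xμ)
    -- `proxf z` is the unique minimizer of `y ↦ f(y) + (1/(2γ))‖y − z‖²` over `E`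
    (proxf : E → E)
    (hproxf : ∀ z : E,
      IsMinOn (fun y => f y + 1 / (2 * γ) * ‖y - z‖ ^ 2) Set.univ (proxf z))
    (hproxfu : ∀ z y : E,
      IsMinOn (fun w => f w + 1 / (2 * γ) * ‖w - z‖ ^ 2) Set.univ y → y = proxf z)
    -- `q w` is the unique minimizer of `y ↦ ι̂_μ(y) + (1/(2γ))‖y − w‖²` over the closed ball
    (q : E → E)
    (hq : ∀ w : E, q w ∈ Metric.closedBall xbar rmax ∧
      IsMinOn (fun y => (Metric.infDist y X) ^ 2 / (2 * μ) + β / 2 * ‖y‖ ^ 2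
          + 1 / (2 * γ) * ‖y - w‖ ^ 2) (Metric.closedBall xbar rmax) (q w))
    (hqu : ∀ w y : E, y ∈ Metric.closedBall xbar rmax →
      IsMinOn (fun v => (Metric.infDist v X) ^ 2 / (2 * μ) + β / 2 * ‖v‖ ^ 2
          + 1 / (2 * γ) * ‖v - w‖ ^ 2) (Metric.closedBall xbar rmax) y → y = q w) :
    (∀ z ∈ Metric.ball xbar rmax,
      (q ((2 : ℝ) • proxf z - z) + z - proxf z = z ↔ z = xμ + γ • f' xμ)) ∧
    proxf (xμ + γ • f' xμ) = xμ ∧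
    ({z : E | q ((2 : ℝ) • proxf z - z) + z - proxf z = z} ∩ Metric.ball xbar rmax).Subsingleton ∧
    (xμ + γ • f' xμ ∈ Metric.ball xbar rmax →
      {z : E | q ((2 : ℝ) • proxf z - z) + z - proxf z = z} ∩ Metric.ball xbar rmax
        = {xμ + γ • f' xμ} ∧
      proxf '' ({z : E | q ((2 : ℝ) • proxf z - z) + z - proxf z = z} ∩ Metric.ball xbar rmax)
        = {xμ}) := by
  have hf : ConvexOn ℝ univ f :=
    (strongConvexOn_iff_convex.2 hsc).convexOn fun r => by positivity
  have hobjective : (fun y => f y + (Metric.infDist y X) ^ 2 / (2 * μ) + β / 2 * ‖y‖ ^ 2)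
      = f + fun y => (Metric.infDist y X) ^ 2 / (2 * μ) + β / 2 * ‖y‖ ^ 2 :=
    funext fun _ => add_assoc _ _ _
  have hfixed : {z : E | q ((2 : ℝ) • proxf z - z) + z - proxf z = z} = {xμ + γ • f' xμ} :=
    Set.ext <| douglasRachford_eq_self_iff_eq_add_smul hγ hf hgrad hpenconv
      (Metric.ball_subset_closedBall hxμball) (hobjective ▸ hxμmin) (hobjective ▸ hxμuniq)
      hproxf hproxfu hq hqu
  have hprox : proxf (xμ + γ • f' xμ) = xμ := (prox_eq_iff hγ hf hgrad hproxf hproxfu).2 rfl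
  refine ⟨fun z _ => Set.ext_iff.1 hfixed z, hprox, ?_, fun hball => ?_⟩
  · rw [hfixed]
    exact subsingleton_singleton.anti inter_subset_left
  · rw [hfixed, singleton_inter_of_mem hball, image_singleton, hprox]
    exact ⟨rfl, rfl⟩
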